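/- arXiv:2011.03688 — 6 statements merged into one kernel-verified Lean document; each statement's English description precedes it below -/
import Mathlib

section
/- Assume W*V = I_S and that f_s : ℝ × ℂ^S → ℂ^S is continuous. Suppose v : [0,H] → ℂ^N satisfies, for every θ ∈ [0,H], v'(θ) = δ V f_s(T + δθ, W* v(θ)) + Σ_{j=1}^{i} γ_j(θ/H) g_j, where g_j := f(T_j, Y_j) − V f_s(T_j, W* Y_j). Then the component of the endpoint value outside the surrogate subspace is given by a Runge–Kutta update: (I_N − V W*) v(H) = (I_N − V W*) ( v(0) + H Σ_{j=1}^{i} γ̄_j g_j ), where γ̄_j := ∫₀¹ γ_j(τ) dτ. -/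
/-!
Since `W* V = I`, the complementary projector `I - V W*` annihilates the range of `V` and hence
the surrogate term of the fast ODE. The projected solution therefore has the explicit derivative
`Σ_j γ_j(θ/H) (I - V W*) g_j`, and the fundamental theorem of calculus together with the
substitution `θ = H τ` yields the Runge–Kutta update.
-/

open Matrix

theorem HasDerivAt.matrix_mulVec {𝕜 R m n : Type*} [NontriviallyNormedField 𝕜]
    [NormedCommRing R] [NormedAlgebra 𝕜 R] [Fintype m] [Fintype n] (M : Matrix m n R)
    {v : 𝕜 → n → R} {v' : n → R} {x : 𝕜} (h : HasDerivAt v v' x) :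
    HasDerivAt (fun t => M *ᵥ v t) (M *ᵥ v') x :=
  (ContinuousLinearMap.mk (M.mulVecLin.restrictScalars 𝕜)
    (continuous_const.matrix_mulVec continuous_id)).hasFDerivAt.comp_hasDerivAt x h

theorem Matrix.one_sub_mul_mul_eq_zero {R m n : Type*} [Ring R] [Fintype m] [Fintype n]
    [DecidableEq m] [DecidableEq n] {V : Matrix m n R} {W : Matrix n m R} (h : W * V = 1) :
    (1 - V * W) * V = 0 := by
  rw [Matrix.sub_mul, Matrix.mul_assoc, h, Matrix.one_mul, Matrix.mul_one, sub_self]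

theorem intervalIntegral.integral_comp_div_smul_const {E : Type*} [NormedAddCommGroup E]
    [NormedSpace ℝ E] [CompleteSpace E] (φ : ℝ → ℝ) (p : E) (H : ℝ) :
    ∫ θ in (0:ℝ)..H, φ (θ / H) • p = H • (∫ τ in (0:ℝ)..1, φ τ) • p := by
  rcases eq_or_ne H 0 with rfl | hH
  · simp
  rw [intervalIntegral.integral_comp_div (fun τ => φ τ • p) hH, zero_div, div_self hH,
    intervalIntegral.integral_smul_const]

theorem eq_add_smul_sum_integral_of_hasDerivAt_sum_polynomial_smul {E ι : Type*}
    [NormedAddCommGroup E] [NormedSpace ℝ E] [CompleteSpace E] [Fintype ι]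
    (γ : ι → Polynomial ℝ) (p : ι → E) {u : ℝ → E} {H : ℝ}
    (hu : ∀ θ ∈ Set.uIcc 0 H, HasDerivAt u (∑ j, (γ j).eval (θ / H) • p j) θ) :
    u H = u 0 + H • ∑ j, (∫ τ in (0:ℝ)..1, (γ j).eval τ) • p j := by
  have hcont : ∀ j, Continuous fun θ : ℝ => (γ j).eval (θ / H) • p j := fun j =>
    ((γ j).continuous.comp (continuous_id.div_const H)).smul continuous_const
  have hftc := intervalIntegral.integral_eq_sub_of_hasDerivAt hu
    ((continuous_finsetSum _ fun j _ => hcont j).intervalIntegrable 0 H)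
  rw [intervalIntegral.integral_finsetSum fun j _ => (hcont j).intervalIntegrable 0 H] at hftc
  simp only [fun j => intervalIntegral.integral_comp_div_smul_const (γ j).eval (p j) H] at hftc
  rw [Finset.smul_sum, hftc, add_sub_cancel]

theorem sm_mri_gark_outside_subspace_general (N S : ℕ)
    (V W : Matrix (Fin N) (Fin S) ℂ) (hVW : Wᴴ * V = 1)
    (fs : ℝ → (Fin S → ℂ) → (Fin S → ℂ))
    (H : ℝ) (hH : 0 < H) (δ T : ℝ) (i : ℕ)
    (γ : Fin i → Polynomial ℝ)
    (g : Fin i → (Fin N → ℂ))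
    (v : ℝ → (Fin N → ℂ))
    (hv : ∀ θ ∈ Set.Icc (0:ℝ) H,
      HasDerivAt v
        (δ • V.mulVec (fs (T + δ * θ) (Wᴴ.mulVec (v θ))) +
          ∑ j, ((γ j).eval (θ / H)) • g j) θ) :
    v H - (V * Wᴴ).mulVec (v H) =
      (v 0 + H • ∑ j, (∫ τ in (0:ℝ)..1, (γ j).eval τ) • g j) -
        (V * Wᴴ).mulVec (v 0 + H • ∑ j, (∫ τ in (0:ℝ)..1, (γ j).eval τ) • g j) := by
  set Q : Matrix (Fin N) (Fin N) ℂ := 1 - V * Wᴴ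
  have hQV : Q * V = 0 := Matrix.one_sub_mul_mul_eq_zero hVW
  have hQv : ∀ θ ∈ Set.uIcc 0 H,
      HasDerivAt (fun t => Q *ᵥ v t) (∑ j, (γ j).eval (θ / H) • Q *ᵥ g j) θ := by
    intro θ hθ
    rw [Set.uIcc_of_le hH.le] at hθ
    convert (hv θ hθ).matrix_mulVec Q using 1
    simp only [mulVec_add, mulVec_smul, mulVec_mulVec, hQV, zero_mulVec, smul_zero, mulVec_sum,
      zero_add]
  have hproj : ∀ x, x - (V * Wᴴ) *ᵥ x = Q *ᵥ x := fun x => by rw [sub_mulVec, one_mulVec]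
  rw [hproj, hproj, eq_add_smul_sum_integral_of_hasDerivAt_sum_polynomial_smul γ _ hQv]
  simp only [mulVec_add, mulVec_smul, mulVec_sum]

/-- If `W* V = I_S`, `f_s` is continuous, and `v : [0,H] → ℂ^N` solves the
full-space modified fast ODE
`v'(θ) = δ V f_s(T + δθ, W* v(θ)) + Σ_j γ_j(θ/H) g_j`, with
`g_j = f(T_j, Y_j) − V f_s(T_j, W* Y_j)`, then the component of `v(H)` outside the
surrogate subspace is a Runge–Kutta update:
`(I − V W*) v(H) = (I − V W*) (v(0) + H Σ_j γ̄_j g_j)` where `γ̄_j = ∫₀¹ γ_j(τ) dτ`. -/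
theorem sm_mri_gark_outside_subspace (N S : ℕ) (hN : 0 < N) (hS : 0 < S)
    (V W : Matrix (Fin N) (Fin S) ℂ) (hVW : Wᴴ * V = 1)
    (f : ℝ → (Fin N → ℂ) → (Fin N → ℂ))
    (fs : ℝ → (Fin S → ℂ) → (Fin S → ℂ))
    (hfs : Continuous fun p : ℝ × (Fin S → ℂ) => fs p.1 p.2)
    (H : ℝ) (hH : 0 < H) (δ T : ℝ) (i : ℕ)
    (Tj : Fin i → ℝ) (Y : Fin i → (Fin N → ℂ)) (γ : Fin i → Polynomial ℝ)
    (g : Fin i → (Fin N → ℂ))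
    (hg : ∀ j, g j = f (Tj j) (Y j) - V.mulVec (fs (Tj j) (Wᴴ.mulVec (Y j))))
    (v : ℝ → (Fin N → ℂ))
    (hv : ∀ θ ∈ Set.Icc (0:ℝ) H,
      HasDerivAt v
        (δ • V.mulVec (fs (T + δ * θ) (Wᴴ.mulVec (v θ))) +
          ∑ j, ((γ j).eval (θ / H)) • g j) θ) :
    v H - (V * Wᴴ).mulVec (v H) =
      (v 0 + H • ∑ j, (∫ τ in (0:ℝ)..1, (γ j).eval τ) • g j) -
        (V * Wᴴ).mulVec (v 0 + H • ∑ j, (∫ τ in (0:ℝ)..1, (γ j).eval τ) • g j) :=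
  sm_mri_gark_outside_subspace_general N S V W hVW fs H hH δ T i γ g v hv
end

section
/- Assume W*V = I_S, f_s is continuous, and there is L ≥ 0 with ‖f_s(t,a) − f_s(t,b)‖ ≤ L‖a − b‖ for all t ∈ ℝ and a, b ∈ ℂ^S. Let y_n ∈ ℂ^N, t_n ∈ ℝ, H > 0, abscissae c_1,…,c_s ∈ ℝ, stage vectors Y_1,…,Y_s ∈ ℂ^N, Runge–Kutta weights b_1,…,b_s ∈ ℝ, and real polynomials γ_1,…,γ_s with γ̄_j := ∫₀¹ γ_j(τ) dτ = b_j for every j. Suppose: (i) v : [0,H] → ℂ^N satisfies v(0) = y_n and v'(θ) = V f_s(t_n + θ, W* v(θ)) + Σ_{j=1}^{s} γ_j(θ/H) ( f(t_n + c_j H, Y_j) − V f_s(t_n + c_j H, W* Y_j) ) for θ ∈ [0,H]; and (ii) z : [0,H] → ℂ^S satisfies z(0) = W* y_n and z'(θ) = f_s(t_n + θ, z(θ)) + Σ_{j=1}^{s} γ_j(θ/H) ( W* f(t_n + c_j H, Y_j) − f_s(t_n + c_j H, W* Y_j) ) for θ ∈ [0,H]. Then v(H) = V z(H) + (I_N −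 V W*) ( y_n + H Σ_{j=1}^{s} b_j f(t_n + c_j H, Y_j) ); that is, the SM-SPC-MRI-GARK corrector of Definition 3.3, solving only an S-dimensional ODE, reproduces the exact endpoint of the N-dimensional SPC-MRI-GARK corrector applied to the partitioned system y' = V f_s(t, W*y) + ( f(t,y) − V f_s(t, W*y) ). -/
open Matrix Set

/-!
Since `W* V = I`, the vector `W* v` solves the same Lipschitz ODE as `z` with the same initial
value, so `W* v = z` on `[0, H]`. The projector `P = I - V W*` annihilates `V`, so `(P v)'` is
`Σ_j γ_j(θ/H) P f_j`, independent of `v`, and integrates to `P v(H) = P y_n + H Σ_j b_j P f_j`.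
The claim is the splitting `v(H) = V (W* v(H)) + P v(H)`.
-/

theorem ODE_solution_unique_of_hasDerivAt {E : Type*} [NormedAddCommGroup E] [NormedSpace ℝ E]
    {K : NNReal} {F : ℝ → E → E} (hF : ∀ t, LipschitzWith K (F t)) {f g : ℝ → E} {a b : ℝ}
    (hf : ∀ t ∈ Icc a b, HasDerivAt f (F t (f t)) t)
    (hg : ∀ t ∈ Icc a b, HasDerivAt g (F t (g t)) t) (ha : f a = g a) :
    EqOn f g (Icc a b) :=
  ODE_solution_unique hF (fun t ht => (hf t ht).continuousAt.continuousWithinAt)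
    (fun t ht => (hf t (Ico_subset_Icc_self ht)).hasDerivWithinAt)
    (fun t ht => (hg t ht).continuousAt.continuousWithinAt)
    (fun t ht => (hg t (Ico_subset_Icc_self ht)).hasDerivWithinAt) ha

theorem sub_eq_smul_sum_integral_of_hasDerivAt {E ι : Type*} [NormedAddCommGroup E]
    [NormedSpace ℝ E] [CompleteSpace E] [Fintype ι] {H : ℝ} (hH : 0 < H) (p : ι → Polynomial ℝ)
    (d : ι → E) {g : ℝ → E} (hg : ∀ θ ∈ Icc 0 H, HasDerivAt g (∑ j, (p j).eval (θ / H) • d j) θ) :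
    g H - g 0 = H • ∑ j, (∫ τ in (0:ℝ)..1, (p j).eval τ) • d j := by
  have hcont : ∀ j, Continuous fun θ => (p j).eval (θ / H) • d j := fun j =>
    ((p j).continuous.comp (continuous_id.div_const H)).smul continuous_const
  rw [← intervalIntegral.integral_eq_sub_of_hasDerivAt
      (fun θ hθ => hg θ (by rwa [uIcc_of_le hH.le] at hθ))
      ((continuous_finsetSum _ fun j _ => hcont j).intervalIntegrable 0 H),
    intervalIntegral.integral_finsetSum fun j _ => (hcont j).intervalIntegrable 0 H,
    Finset.smul_sum]
  refine Finset.sum_congr rfl fun j _ => ?_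
  rw [intervalIntegral.integral_smul_const, smul_smul,
    intervalIntegral.integral_comp_div (fun τ => (p j).eval τ) hH.ne', zero_div,
    div_self hH.ne', smul_eq_mul]

section MulVec

variable {𝕜 : Type*} [RCLike 𝕜] {m n ι : Type*} [Fintype m] [Fintype n] [Fintype ι]

theorem HasDerivAt.matrix_mulVec_s6 (A : Matrix m n 𝕜) {u : ℝ → n → 𝕜} {u' : n → 𝕜} {θ : ℝ}
    (h : HasDerivAt u u' θ) : HasDerivAt (fun t => A *ᵥ u t) (A *ᵥ u') θ :=
  ((LinearMap.toContinuousLinearMap (mulVecLin A)).restrictScalars ℝ).hasFDerivAt.comp_hasDerivAt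
    θ h

variable [DecidableEq n] {A : Matrix m n 𝕜} {B : Matrix n m 𝕜}

theorem one_sub_mul_mul_eq_zero_of_mul_eq_one [DecidableEq m] (hBA : B * A = 1) :
    (1 - A * B) * A = 0 := by
  rw [Matrix.sub_mul, Matrix.mul_assoc, hBA, Matrix.one_mul, Matrix.mul_one, sub_self]

variable {u : ℝ → m → 𝕜} {θ : ℝ} {a : n → 𝕜} {r : ι → ℝ} {f : ι → m → 𝕜} {e : ι → n → 𝕜}

theorem HasDerivAt.mulVec_of_mul_eq_one (hBA : B * A = 1)
    (hu : HasDerivAt u (A *ᵥ a + ∑ j, r j • (f j - A *ᵥ e j)) θ) :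
    HasDerivAt (fun t => B *ᵥ u t) (a + ∑ j, r j • (B *ᵥ f j - e j)) θ := by
  convert hu.matrix_mulVec_s6 B using 1
  simp only [mulVec_add, mulVec_sum, mulVec_smul, mulVec_sub, mulVec_mulVec, hBA, one_mulVec]

theorem HasDerivAt.one_sub_mulVec_of_mul_eq_one [DecidableEq m] (hBA : B * A = 1)
    (hu : HasDerivAt u (A *ᵥ a + ∑ j, r j • (f j - A *ᵥ e j)) θ) :
    HasDerivAt (fun t => (1 - A * B) *ᵥ u t) (∑ j, r j • ((1 - A * B) *ᵥ f j)) θ := by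
  convert hu.matrix_mulVec_s6 (1 - A * B) using 1
  simp only [mulVec_add, mulVec_sum, mulVec_smul, mulVec_sub, mulVec_mulVec,
    one_sub_mul_mul_eq_zero_of_mul_eq_one hBA, zero_mulVec, zero_add, sub_zero]

end MulVec

theorem sm_spc_mri_gark_corrector_equivalence_general (N S : ℕ)
    (V W : Matrix (Fin N) (Fin S) ℂ) (hVW : Wᴴ * V = 1)
    (f : ℝ → (Fin N → ℂ) → (Fin N → ℂ))
    (fs : ℝ → (Fin S → ℂ) → (Fin S → ℂ))
    (L : ℝ)
    (hlip : ∀ (t : ℝ) (a b : Fin S → ℂ), ‖fs t a - fs t b‖ ≤ L * ‖a - b‖)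
    (yn : Fin N → ℂ) (tn : ℝ) (H : ℝ) (hH : 0 < H) (s : ℕ)
    (c : Fin s → ℝ) (Y : Fin s → (Fin N → ℂ)) (b : Fin s → ℝ)
    (γ : Fin s → Polynomial ℝ)
    (hγb : ∀ j, (∫ τ in (0:ℝ)..1, (γ j).eval τ) = b j)
    (v : ℝ → (Fin N → ℂ)) (hv0 : v 0 = yn)
    (hv : ∀ θ ∈ Set.Icc (0:ℝ) H,
      HasDerivAt v
        (V.mulVec (fs (tn + θ) (Wᴴ.mulVec (v θ))) +
          ∑ j, ((γ j).eval (θ / H)) •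
            (f (tn + c j * H) (Y j) -
              V.mulVec (fs (tn + c j * H) (Wᴴ.mulVec (Y j))))) θ)
    (z : ℝ → (Fin S → ℂ)) (hz0 : z 0 = Wᴴ.mulVec yn)
    (hz : ∀ θ ∈ Set.Icc (0:ℝ) H,
      HasDerivAt z
        (fs (tn + θ) (z θ) +
          ∑ j, ((γ j).eval (θ / H)) •
            (Wᴴ.mulVec (f (tn + c j * H) (Y j)) -
              fs (tn + c j * H) (Wᴴ.mulVec (Y j)))) θ) :
    v H =
      V.mulVec (z H) +
        ((yn + H • ∑ j, b j • f (tn + c j * H) (Y j)) -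
          (V * Wᴴ).mulVec (yn + H • ∑ j, b j • f (tn + c j * H) (Y j))) := by
  set F : ℝ → (Fin S → ℂ) → (Fin S → ℂ) := fun θ x =>
    fs (tn + θ) x + ∑ j, (γ j).eval (θ / H) •
      (Wᴴ *ᵥ f (tn + c j * H) (Y j) - fs (tn + c j * H) (Wᴴ *ᵥ Y j))
  have hF : ∀ θ, LipschitzWith L.toNNReal (F θ) := fun θ => .of_dist_le' fun x y => by
    simpa only [F, dist_eq_norm, add_sub_add_right_eq_sub] using hlip _ x y
  have hWv : Wᴴ *ᵥ v H = z H :=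
    ODE_solution_unique_of_hasDerivAt hF (fun θ hθ => (hv θ hθ).mulVec_of_mul_eq_one hVW) hz
      (by rw [hv0, hz0]) ⟨hH.le, le_rfl⟩
  have hPv : (1 - V * Wᴴ) *ᵥ v H - (1 - V * Wᴴ) *ᵥ yn =
      H • ∑ j, b j • (1 - V * Wᴴ) *ᵥ f (tn + c j * H) (Y j) := by
    simpa only [hγb, hv0] using sub_eq_smul_sum_integral_of_hasDerivAt hH γ _
      fun θ hθ => (hv θ hθ).one_sub_mulVec_of_mul_eq_one hVW
  calc v H = V *ᵥ (Wᴴ *ᵥ v H) + (1 - V * Wᴴ) *ᵥ v H := by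
        rw [sub_mulVec, one_mulVec, mulVec_mulVec, add_sub_cancel]
    _ = V *ᵥ z H + (1 - V * Wᴴ) *ᵥ (yn + H • ∑ j, b j • f (tn + c j * H) (Y j)) := by
      rw [hWv, sub_eq_iff_eq_add.mp hPv, add_comm (H • _)]
      simp only [mulVec_add, mulVec_smul, mulVec_sum]
    _ = _ := by rw [sub_mulVec, one_mulVec]

/-- If `W* V = I_S`, `f_s` is continuous and `L`-Lipschitz in its second
argument, the coupling polynomials satisfy `γ̄_j = ∫₀¹ γ_j(τ) dτ = b_j`, `v` solves the
N-dimensional SPC-MRI-GARK corrector ODE with `v(0) = y_n`, and `z` solves the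
S-dimensional corrector ODE with `z(0) = W* y_n`, then
`v(H) = V z(H) + (I − V W*) (y_n + H Σ_j b_j f(t_n + c_j H, Y_j))`: the
SM-SPC-MRI-GARK corrector reproduces the exact endpoint of the N-dimensional
SPC-MRI-GARK corrector for the partitioned system. -/
theorem sm_spc_mri_gark_corrector_equivalence (N S : ℕ) (hN : 0 < N) (hS : 0 < S)
    (V W : Matrix (Fin N) (Fin S) ℂ) (hVW : Wᴴ * V = 1)
    (f : ℝ → (Fin N → ℂ) → (Fin N → ℂ))
    (fs : ℝ → (Fin S → ℂ) → (Fin S → ℂ))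
    (hfs : Continuous fun p : ℝ × (Fin S → ℂ) => fs p.1 p.2)
    (L : ℝ) (hL : 0 ≤ L)
    (hlip : ∀ (t : ℝ) (a b : Fin S → ℂ), ‖fs t a - fs t b‖ ≤ L * ‖a - b‖)
    (yn : Fin N → ℂ) (tn : ℝ) (H : ℝ) (hH : 0 < H) (s : ℕ)
    (c : Fin s → ℝ) (Y : Fin s → (Fin N → ℂ)) (b : Fin s → ℝ)
    (γ : Fin s → Polynomial ℝ)
    (hγb : ∀ j, (∫ τ in (0:ℝ)..1, (γ j).eval τ) = b j)
    (v : ℝ → (Fin N → ℂ)) (hv0 : v 0 = yn)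
    (hv : ∀ θ ∈ Set.Icc (0:ℝ) H,
      HasDerivAt v
        (V.mulVec (fs (tn + θ) (Wᴴ.mulVec (v θ))) +
          ∑ j, ((γ j).eval (θ / H)) •
            (f (tn + c j * H) (Y j) -
              V.mulVec (fs (tn + c j * H) (Wᴴ.mulVec (Y j))))) θ)
    (z : ℝ → (Fin S → ℂ)) (hz0 : z 0 = Wᴴ.mulVec yn)
    (hz : ∀ θ ∈ Set.Icc (0:ℝ) H,
      HasDerivAt z
        (fs (tn + θ) (z θ) +
          ∑ j, ((γ j).eval (θ / H)) •
            (Wᴴ.mulVec (f (tn + c j * H) (Y j)) -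
              fs (tn + c j * H) (Wᴴ.mulVec (Y j)))) θ) :
    v H =
      V.mulVec (z H) +
        ((yn + H • ∑ j, b j • f (tn + c j * H) (Y j)) -
          (V * Wᴴ).mulVec (yn + H • ∑ j, b j • f (tn + c j * H) (Y j))) :=
  sm_spc_mri_gark_corrector_equivalence_general N S V W hVW f fs L hlip yn tn H hH s c Y b γ hγb v
    hv0 hv z hz0 hz
end

section
/- Let f : ℝ × ℂ^N → ℂ^N be continuous and satisfy ‖f(t,a) − f(t,b)‖ ≤ L‖a − b‖ for some L ≥ 0 and all t, a, b, and let y : ℝ → ℂ^N satisfy y'(t) = f(t, y(t)) for all t ∈ ℝ. Fix t_n ∈ ℝ, H > 0, an integer s ≥ 1, and abscissae c_1,…,c_s ∈ ℝ with c_1 = 0, and set c_{s+1} := 1 and δ_i := c_{i+1} − c_i for i = 1,…,s. Suppose Y_1 = y(t_n) and, for i = 1,…,s, there are functions v_i : [0,H] → ℂ^N with v_i(0) = Y_i and v_i'(θ) = δ_i f(t_n + c_i H + δ_i θ, v_i(θ)) for all θ ∈ [0,H], and Y_{i+1} = v_i(H). Then Y_{i+1} = y(t_n + c_{i+1} H)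 for every i = 1,…,s; in particular y_{n+1} := Y_{s+1} = y(t_n + H). (That is, when the surrogate model equals the full model and V = W* = I_N, the SM-MRI-GARK step is exact.) -/
/-- Let `f` be continuous and globally Lipschitz in its second argument,
and `y` solve `y' = f(t, y)` on ℝ.  Given abscissae `c 1, …, c s` with `c 1 = 0` and
`c (s+1) = 1`, set `δ_i = c (i+1) − c i`.  If `Y 1 = y t_n` and each stage is obtained
as `Y (i+1) = v_i(H)` where `v_i` solves `v_i'(θ) = δ_i f(t_n + c_i H + δ_i θ, v_i(θ))`
on `[0,H]` with `v_i(0) = Y i`, then `Y (i+1) = y(t_n + c (i+1) H)` for `i = 1,…,s`;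
in particular `Y (s+1) = y(t_n + H)`: when the surrogate model equals the full model
and `V = W* = I`, the SM-MRI-GARK step is exact. -/
theorem sm_mri_gark_step_exact (N : ℕ) (hN : 0 < N)
    (f : ℝ → (Fin N → ℂ) → (Fin N → ℂ))
    (hf : Continuous fun p : ℝ × (Fin N → ℂ) => f p.1 p.2)
    (L : ℝ) (hL : 0 ≤ L)
    (hlip : ∀ (t : ℝ) (a b : Fin N → ℂ), ‖f t a - f t b‖ ≤ L * ‖a - b‖)
    (y : ℝ → (Fin N → ℂ)) (hy : ∀ t : ℝ, HasDerivAt y (f t (y t)) t)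
    (tn H : ℝ) (hH : 0 < H) (s : ℕ) (hs : 1 ≤ s)
    (c : ℕ → ℝ) (hc1 : c 1 = 0) (hcs : c (s + 1) = 1)
    (Y : ℕ → (Fin N → ℂ)) (hY1 : Y 1 = y tn)
    (v : ℕ → ℝ → (Fin N → ℂ))
    (hv0 : ∀ i, 1 ≤ i → i ≤ s → v i 0 = Y i)
    (hv : ∀ i, 1 ≤ i → i ≤ s → ∀ θ ∈ Set.Icc (0:ℝ) H,
      HasDerivAt (v i)
        ((c (i + 1) - c i) •
          f (tn + c i * H + (c (i + 1) - c i) * θ) (v i θ)) θ)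
    (hYnext : ∀ i, 1 ≤ i → i ≤ s → Y (i + 1) = v i H) :
    (∀ i, 1 ≤ i → i ≤ s → Y (i + 1) = y (tn + c (i + 1) * H)) ∧
      Y (s + 1) = y (tn + H) := by
  -- key claim: Y i = y (tn + c i * H) for all 1 ≤ i ≤ s + 1
  have key : ∀ i, 1 ≤ i → i ≤ s + 1 → Y i = y (tn + c i * H) := by
    intro i hi
    induction i, hi using Nat.le_induction with
    | base => intro _; simp [hY1, hc1]
    | succ i hi ih =>
      intro hle
      have his : i ≤ s := Nat.lt_succ_iff.mp (Nat.lt_of_lt_of_le (Nat.lt_succ_self i) hle)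
      have hYi : Y i = y (tn + c i * H) := ih (Nat.le_succ_of_le his)
      set δ := c (i + 1) - c i with hδ
      -- the exact solution shifted and rescaled
      set w : ℝ → (Fin N → ℂ) := fun θ => y (tn + c i * H + δ * θ) with hw
      -- Lipschitz constant
      set K : NNReal := Real.toNNReal (|δ| * L) with hK
      have hlipK : ∀ t : ℝ, LipschitzWith K
          (fun x : Fin N → ℂ => δ • f (tn + c i * H + δ * t) x) := by
        intro t
        apply LipschitzWith.of_dist_le_mul
        intro a b
        simp only [dist_eq_norm, ← smul_sub, norm_smul, Real.norm_eq_abs]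
        have : (K : ℝ) = |δ| * L := Real.coe_toNNReal _ (by positivity)
        rw [this, mul_assoc]
        exact mul_le_mul_of_nonneg_left (hlip _ a b) (abs_nonneg δ)
      have hwderiv : ∀ θ : ℝ, HasDerivAt w
          (δ • f (tn + c i * H + δ * θ) (w θ)) θ := by
        intro θ
        have h1 : HasDerivAt (fun θ : ℝ => tn + c i * H + δ * θ) δ θ := by
          simpa using ((hasDerivAt_id θ).const_mul δ).const_add (tn + c i * H)
        exact (hy (tn + c i * H + δ * θ)).scomp θ h1
      have huniq : Set.EqOn (v i) w (Set.Icc 0 H) := by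
        apply ODE_solution_unique (v := fun t x => δ • f (tn + c i * H + δ * t) x)
          (K := K) hlipK
        · intro θ hθ
          exact (hv i hi his θ hθ).continuousAt.continuousWithinAt
        · intro θ hθ
          exact (hv i hi his θ (Set.mem_Icc_of_Ico hθ)).hasDerivWithinAt
        · exact fun θ _ => (hwderiv θ).continuousAt.continuousWithinAt
        · exact fun θ _ => (hwderiv θ).hasDerivWithinAt
        · rw [hv0 i hi his, hYi]
          simp [hw]
      have hvH : v i H = w H := huniq (Set.mem_Icc.mpr ⟨le_of_lt hH, le_refl H⟩)
      rw [hYnext i hi his, hvH]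
      simp only [hw, hδ]
      ring_nf
  refine ⟨fun i hi his => key (i + 1) (Nat.le_succ_of_le hi) (Nat.succ_le_succ his), ?_⟩
  have := key (s + 1) (Nat.le_succ_of_le hs) (le_refl _)
  rwa [hcs, one_mul] at this
end

section
/- Assume W*V = I_S. Fix H > 0, a vector y_n ∈ ℂ^N, vectors k_1,…,k_s ∈ ℂ^N, weights b_1,…,b_s ∈ ℝ, and real polynomials γ_1,…,γ_s with γ̄_j := ∫₀¹ γ_j(τ) dτ = b_j for every j. Let z : [0,H] → ℂ^S satisfy z(0) = W* y_n and z'(θ) = Σ_{j=1}^{s} γ_j(θ/H) W* k_j for every θ ∈ [0,H]. Then V z(H) + (I_N − V W*) ( y_n + H Σ_{j=1}^{s} b_j k_j ) = y_n + H Σ_{j=1}^{s} b_j k_j. (That is, with the zero surrogate model f_s ≡ 0 and k_j = f(t_n + c_j H, Y_j), the SM-SPC-MRI-GARK step of Definition 3.3 reduces to a step of the base explicit Runge–Kutta method.) -/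
open Matrix

/-- With `W* V = I_S`, weights `b_j`, coupling polynomials with
`γ̄_j = ∫₀¹ γ_j(τ) dτ = b_j`, and the zero surrogate model, if `z` solves
`z'(θ) = Σ_j γ_j(θ/H) W* k_j` with `z(0) = W* y_n`, then the SM-SPC-MRI-GARK step
reduces to a base explicit Runge–Kutta step:
`V z(H) + (I − V W*) (y_n + H Σ_j b_j k_j) = y_n + H Σ_j b_j k_j`. -/
theorem sm_spc_mri_gark_zero_surrogate_step (N S : ℕ) (hN : 0 < N) (hS : 0 < S)
    (V W : Matrix (Fin N) (Fin S) ℂ) (hVW : Wᴴ * V = 1)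
    (H : ℝ) (hH : 0 < H) (s : ℕ)
    (yn : Fin N → ℂ) (k : Fin s → (Fin N → ℂ)) (b : Fin s → ℝ)
    (γ : Fin s → Polynomial ℝ)
    (hγb : ∀ j, (∫ τ in (0:ℝ)..1, (γ j).eval τ) = b j)
    (z : ℝ → (Fin S → ℂ)) (hz0 : z 0 = Wᴴ.mulVec yn)
    (hz : ∀ θ ∈ Set.Icc (0:ℝ) H,
      HasDerivAt z (∑ j, ((γ j).eval (θ / H)) • Wᴴ.mulVec (k j)) θ) :
    V.mulVec (z H) +
        ((yn + H • ∑ j, b j • k j) -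
          (V * Wᴴ).mulVec (yn + H • ∑ j, b j • k j)) =
      yn + H • ∑ j, b j • k j := by
  have hc1 : ∀ j : Fin s, Continuous fun θ : ℝ => ((γ j).eval (θ / H)) • Wᴴ.mulVec (k j) :=
    fun j => (((γ j).continuous).comp (continuous_id.div_const H)).smul continuous_const
  have hcont : Continuous fun θ : ℝ => ∑ j, ((γ j).eval (θ / H)) • Wᴴ.mulVec (k j) :=
    continuous_finset_sum _ fun j _ => hc1 j
  have hftc : (∫ θ in (0:ℝ)..H, ∑ j, ((γ j).eval (θ / H)) • Wᴴ.mulVec (k j))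
      = z H - z 0 := by
    apply intervalIntegral.integral_eq_sub_of_hasDerivAt
    · intro t ht
      exact hz t (by rwa [Set.uIcc_of_le hH.le] at ht)
    · exact hcont.intervalIntegrable _ _
  have hint : (∫ θ in (0:ℝ)..H, ∑ j, ((γ j).eval (θ / H)) • Wᴴ.mulVec (k j))
      = ∑ j, (H * b j) • Wᴴ.mulVec (k j) := by
    rw [intervalIntegral.integral_finset_sum]
    · refine Finset.sum_congr rfl fun j _ => ?_
      rw [intervalIntegral.integral_smul_const]
      congr 1
      have := intervalIntegral.integral_comp_div (a := (0:ℝ)) (b := H)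
        (c := H) (f := fun τ => (γ j).eval τ) hH.ne'
      rw [this]
      simp [div_self hH.ne', hγb j, smul_eq_mul]
    · intro j _
      exact (hc1 j).intervalIntegrable _ _
  have hzH : z H = Wᴴ.mulVec yn + ∑ j, (H * b j) • Wᴴ.mulVec (k j) := by
    have := hftc.symm.trans hint
    rw [hz0] at this
    linear_combination (norm := module) this
  have hVz : V.mulVec (z H) = (V * Wᴴ).mulVec (yn + H • ∑ j, b j • k j) := by
    rw [hzH]
    simp only [← Matrix.mulVecLin_apply, map_add, map_sum, LinearMap.map_smul_of_tower,
      Finset.smul_sum, Matrix.mulVecLin_mul, LinearMap.comp_apply, smul_smul]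
  rw [hVz]
  abel
end

section
/- Assume W*V = I_S. Let f : ℂ^N → ℂ^N and f_s : ℂ^S → ℂ^S be continuously differentiable (over ℝ) and globally Lipschitz. Let y : ℝ → ℂ^N satisfy y'(t) = f(y(t)) for all t with y(0) = y₀. Suppose that for each H > 0 there is a function z_H : [0,H] → ℂ^S with z_H(0) = W* y₀ and z_H'(θ) = f_s(z_H(θ)) + W* f(y₀) − f_s(W* y₀) for all θ ∈ [0,H], and define the SM-MRI-GARK Euler step Φ(H) := V z_H(H) + (I_N − V W*)( y₀ + H f(y₀) ). Then the local error is second order in the stepsize: y(H) − Φ(H) = O(H²) as H → 0⁺; i.e., SM-MRI-GARK Euler is a first-order accurate method. -/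
open Matrix Asymptotics Filter Topology

private lemma exp_sub_one_le_mul (t : ℝ) (ht : 0 ≤ t) :
    Real.exp t - 1 ≤ t * Real.exp t := by
  have h := Real.add_one_le_exp (-t)
  have hp := Real.exp_pos t
  have hmul : Real.exp (-t) * Real.exp t = 1 := by
    rw [← Real.exp_add]; simp
  nlinarith

private lemma gronwall_lin (K ε x : ℝ) (hK : 0 ≤ K) (hε : 0 ≤ ε) (hx : 0 ≤ x)
    (hx1 : x ≤ 1) : gronwallBound 0 K ε x ≤ ε * Real.exp K * x := by
  rcases eq_or_lt_of_le hK with hK0 | hK0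
  · rw [← hK0, gronwallBound_K0]
    simp [Real.exp_zero]
  · rw [gronwallBound_of_K_ne_0 (ne_of_gt hK0)]
    have h1 : Real.exp (K * x) - 1 ≤ K * x * Real.exp (K * x) :=
      exp_sub_one_le_mul _ (by positivity)
    have h2 : Real.exp (K * x) ≤ Real.exp K := by
      apply Real.exp_le_exp.2; nlinarith
    have h4 : ε / K * (Real.exp (K * x) - 1) ≤ ε / K * (K * x * Real.exp K) := by
      apply mul_le_mul_of_nonneg_left _ (by positivity)
      calc Real.exp (K * x) - 1 ≤ K * x * Real.exp (K * x) := h1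
        _ ≤ K * x * Real.exp K := by
            apply mul_le_mul_of_nonneg_left h2 (by positivity)
    have h5 : ε / K * (K * x * Real.exp K) = ε * Real.exp K * x := by
      field_simp
    rw [h5] at h4
    simpa using h4

/-- With `W* V = I_S`, `f` and `f_s` continuously differentiable and
globally Lipschitz, and `y` the exact solution of `y' = f(y)`, `y(0) = y₀`, the
SM-MRI-GARK Euler step `Φ(H) = V z_H(H) + (I − V W*) (y₀ + H f(y₀))` — where `z_H`
solves `z' = f_s(z) + W* f(y₀) − f_s(W* y₀)` on `[0,H]` with `z_H(0) = W* y₀` —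
has local error `y(H) − Φ(H) = O(H²)` as `H → 0⁺`: the method is first order. -/
theorem sm_mri_gark_euler_first_order (N S : ℕ) (hN : 0 < N) (hS : 0 < S)
    (V W : Matrix (Fin N) (Fin S) ℂ) (hVW : Wᴴ * V = 1)
    (f : (Fin N → ℂ) → (Fin N → ℂ)) (fs : (Fin S → ℂ) → (Fin S → ℂ))
    (hf : ContDiff ℝ 1 f) (hfs : ContDiff ℝ 1 fs)
    (Lf Lfs : NNReal) (hfL : LipschitzWith Lf f) (hfsL : LipschitzWith Lfs fs)
    (y₀ : Fin N → ℂ)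
    (y : ℝ → (Fin N → ℂ)) (hy0 : y 0 = y₀)
    (hy : ∀ t : ℝ, HasDerivAt y (f (y t)) t)
    (z : ℝ → ℝ → (Fin S → ℂ))
    (hz0 : ∀ H : ℝ, 0 < H → z H 0 = Wᴴ.mulVec y₀)
    (hz : ∀ H : ℝ, 0 < H → ∀ θ ∈ Set.Icc (0:ℝ) H,
      HasDerivAt (z H)
        (fs (z H θ) + (Wᴴ.mulVec (f y₀) - fs (Wᴴ.mulVec y₀))) θ) :
    (fun H : ℝ =>
        y H -
          (V.mulVec (z H H) +
            ((y₀ + H • f y₀) - (V * Wᴴ).mulVec (y₀ + H • f y₀))))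
      =O[𝓝[>] (0:ℝ)] fun H : ℝ => H ^ 2 := by
  set z0 : Fin S → ℂ := Wᴴ.mulVec y₀ with hz0def
  set c : Fin S → ℂ := Wᴴ.mulVec (f y₀) - fs z0 with hcdef
  -- continuity of y and of f ∘ y
  have hycont : Continuous y := by
    rw [continuous_iff_continuousAt]; exact fun t => (hy t).continuousAt
  have hfycont : Continuous fun t => f (y t) := hfL.continuous.comp hycont
  -- bound on f ∘ y on [0,1]
  obtain ⟨M, hM⟩ := (isCompact_Icc (a := (0:ℝ)) (b := 1)).exists_bound_of_continuousOn
    hfycont.continuousOn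
  have hM0 : 0 ≤ M := le_trans (norm_nonneg _) (hM 0 ⟨le_rfl, zero_le_one⟩)
  -- y is M-Lipschitz on [0,1]
  have hyLip : ∀ t ∈ Set.Icc (0:ℝ) 1, ‖y t - y₀‖ ≤ M * t := by
    intro t ht
    have := (convex_Icc (0:ℝ) 1).norm_image_sub_le_of_norm_hasDerivWithin_le
      (f := y) (f' := fun s => f (y s)) (C := M)
      (fun s _ => (hy s).hasDerivWithinAt) hM ⟨le_rfl, zero_le_one⟩ ht
    rw [hy0] at this
    simpa [Real.norm_eq_abs, abs_of_nonneg ht.1] using this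
  -- Euler error for y
  have hyerr : ∀ H : ℝ, H ∈ Set.Ioc (0:ℝ) 1 →
      ‖y H - y₀ - H • f y₀‖ ≤ (Lf * M) * H ^ 2 := by
    intro H hH
    have hint : IntervalIntegrable (fun t => f (y t) - f y₀) MeasureTheory.volume 0 H :=
      (hfycont.sub continuous_const).intervalIntegrable _ _
    have hftc : ∫ t in (0:ℝ)..H, (f (y t) - f y₀) = y H - y₀ - H • f y₀ := by
      have h1 : ∫ t in (0:ℝ)..H, f (y t) = y H - y 0 :=
        intervalIntegral.integral_eq_sub_of_hasDerivAt
          (fun t _ => hy t) (hfycont.intervalIntegrable _ _)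
      rw [intervalIntegral.integral_sub (hfycont.intervalIntegrable _ _)
        (intervalIntegrable_const), h1, intervalIntegral.integral_const, hy0]
      simp [sub_sub]
    rw [← hftc]
    have hbound : ∀ t ∈ Set.uIoc (0:ℝ) H, ‖f (y t) - f y₀‖ ≤ (Lf * M) * H := by
      intro t ht
      rw [Set.uIoc_of_le hH.1.le] at ht
      have ht1 : t ∈ Set.Icc (0:ℝ) 1 := ⟨ht.1.le, ht.2.trans hH.2⟩
      calc ‖f (y t) - f y₀‖ = dist (f (y t)) (f y₀) := (dist_eq_norm _ _).symm
        _ ≤ Lf * dist (y t) y₀ := hfL.dist_le_mul _ _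
        _ = Lf * ‖y t - y₀‖ := by rw [dist_eq_norm]
        _ ≤ Lf * (M * t) := by
            exact mul_le_mul_of_nonneg_left (hyLip t ht1) Lf.coe_nonneg
        _ ≤ (Lf * M) * H := by
            have : M * t ≤ M * H := mul_le_mul_of_nonneg_left ht.2 hM0
            nlinarith [Lf.coe_nonneg]
    calc ‖∫ t in (0:ℝ)..H, (f (y t) - f y₀)‖ ≤ (Lf * M) * H * |H - 0| :=
          intervalIntegral.norm_integral_le_of_norm_le_const hbound
      _ = (Lf * M) * H ^ 2 := by rw [sub_zero, abs_of_pos hH.1]; ring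
  -- the fast constant
  set Cw : ℝ := ‖Wᴴ.mulVec (f y₀)‖ with hCwdef
  have hCw0 : 0 ≤ Cw := norm_nonneg _
  set C1 : ℝ := Cw * Real.exp Lfs with hC1def
  have hC10 : 0 ≤ C1 := by positivity
  -- z stays close to z0
  have hzcont : ∀ H : ℝ, 0 < H → ContinuousOn (z H) (Set.Icc 0 H) := by
    intro H hH
    exact fun θ hθ => ((hz H hH θ hθ).continuousAt).continuousWithinAt
  have hznear : ∀ H : ℝ, H ∈ Set.Ioc (0:ℝ) 1 → ∀ θ ∈ Set.Icc (0:ℝ) H,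
      ‖z H θ - z0‖ ≤ C1 * θ := by
    intro H hH θ hθ
    have hgron := norm_le_gronwallBound_of_norm_deriv_right_le
      (f := fun θ => z H θ - z0) (f' := fun θ => fs (z H θ) + c)
      (δ := 0) (K := Lfs) (ε := Cw) (a := 0) (b := H)
      ((hzcont H hH.1).sub continuousOn_const)
      (fun x hx => (((hz H hH.1 x (Set.mem_Icc_of_Ico hx)).sub_const
        z0).hasDerivWithinAt))
      (by simp [hz0 H hH.1])
      ?_ θ hθ
    · calc ‖z H θ - z0‖ ≤ gronwallBound 0 Lfs Cw (θ - 0) := hgron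
        _ = gronwallBound 0 Lfs Cw θ := by rw [sub_zero]
        _ ≤ Cw * Real.exp Lfs * θ :=
            gronwall_lin _ _ _ Lfs.coe_nonneg hCw0 hθ.1 (hθ.2.trans hH.2)
        _ = C1 * θ := rfl
    · intro x hx
      show ‖fs (z H x) + c‖ ≤ (Lfs : ℝ) * ‖z H x - z0‖ + Cw
      have : fs (z H x) + c = (fs (z H x) - fs z0) + Wᴴ.mulVec (f y₀) := by
        rw [hcdef]; abel
      rw [this]
      calc ‖(fs (z H x) - fs z0) + Wᴴ.mulVec (f y₀)‖
          ≤ ‖fs (z H x) - fs z0‖ + Cw := norm_add_le _ _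
        _ ≤ Lfs * ‖z H x - z0‖ + Cw := by
            have h := hfsL.dist_le_mul (z H x) z0
            rw [dist_eq_norm, dist_eq_norm] at h
            linarith
  -- Euler error for z
  have hzerr : ∀ H : ℝ, H ∈ Set.Ioc (0:ℝ) 1 →
      ‖z H H - z0 - H • Wᴴ.mulVec (f y₀)‖ ≤ (Lfs * C1) * H ^ 2 := by
    intro H hH
    have hzc : ContinuousOn (fun θ => fs (z H θ) - fs z0) (Set.Icc 0 H) :=
      ((hfsL.continuous.comp_continuousOn (hzcont H hH.1)).sub continuousOn_const)
    have huIcc : Set.uIcc (0:ℝ) H = Set.Icc 0 H := Set.uIcc_of_le hH.1.le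
    have hint1 : IntervalIntegrable (fun θ => fs (z H θ) + c) MeasureTheory.volume 0 H := by
      apply ContinuousOn.intervalIntegrable
      rw [huIcc]
      exact (hfsL.continuous.comp_continuousOn (hzcont H hH.1)).add continuousOn_const
    have hftc : ∫ θ in (0:ℝ)..H, (fs (z H θ) + c) = z H H - z0 := by
      rw [intervalIntegral.integral_eq_sub_of_hasDerivAt
        (fun θ hθ => hz H hH.1 θ (huIcc ▸ hθ)) hint1, hz0 H hH.1]
    have hsplit : z H H - z0 - H • Wᴴ.mulVec (f y₀)
        = ∫ θ in (0:ℝ)..H, (fs (z H θ) - fs z0) := by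
      have h2 : ∫ θ in (0:ℝ)..H, (fs (z H θ) - fs z0)
          = (∫ θ in (0:ℝ)..H, (fs (z H θ) + c)) - (H - 0) • (fs z0 + c) := by
        rw [← intervalIntegral.integral_const (fs z0 + c),
          ← intervalIntegral.integral_sub hint1 intervalIntegrable_const]
        congr 1; funext θ; abel
      rw [h2, hftc, sub_zero]
      have : fs z0 + c = Wᴴ.mulVec (f y₀) := by rw [hcdef]; abel
      rw [this]
    rw [hsplit]
    have hbound : ∀ θ ∈ Set.uIoc (0:ℝ) H, ‖fs (z H θ) - fs z0‖ ≤ (Lfs * C1) * H := by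
      intro θ hθ
      rw [Set.uIoc_of_le hH.1.le] at hθ
      have hθI : θ ∈ Set.Icc (0:ℝ) H := ⟨hθ.1.le, hθ.2⟩
      calc ‖fs (z H θ) - fs z0‖ ≤ Lfs * ‖z H θ - z0‖ := by
            have h := hfsL.dist_le_mul (z H θ) z0
            rw [dist_eq_norm, dist_eq_norm] at h; exact h
        _ ≤ Lfs * (C1 * θ) :=
            mul_le_mul_of_nonneg_left (hznear H hH θ hθI) Lfs.coe_nonneg
        _ ≤ (Lfs * C1) * H := by
            have : C1 * θ ≤ C1 * H := mul_le_mul_of_nonneg_left hθ.2 hC10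
            nlinarith [Lfs.coe_nonneg]
    calc ‖∫ θ in (0:ℝ)..H, (fs (z H θ) - fs z0)‖ ≤ (Lfs * C1) * H * |H - 0| :=
          intervalIntegral.norm_integral_le_of_norm_le_const hbound
      _ = (Lfs * C1) * H ^ 2 := by rw [sub_zero, abs_of_pos hH.1]; ring
  -- operator norm bound for mulVec V
  set T : (Fin S → ℂ) →L[ℂ] (Fin N → ℂ) :=
    LinearMap.toContinuousLinearMap (Matrix.mulVecLin V) with hTdef
  have hT : ∀ w, V.mulVec w = T w := fun w => rfl
  -- algebraic identity for the error
  have hkey : ∀ H : ℝ, 0 < H →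
      y H - (V.mulVec (z H H) + ((y₀ + H • f y₀) - (V * Wᴴ).mulVec (y₀ + H • f y₀)))
      = (y H - y₀ - H • f y₀) - V.mulVec (z H H - z0 - H • Wᴴ.mulVec (f y₀)) := by
    intro H hH
    have h1 : (V * Wᴴ).mulVec (y₀ + H • f y₀)
        = V.mulVec (z0 + H • Wᴴ.mulVec (f y₀)) := by
      rw [← Matrix.mulVec_mulVec]
      congr 1
      rw [Matrix.mulVec_add, Matrix.mulVec_smul]
    rw [h1, Matrix.mulVec_add, Matrix.mulVec_sub, Matrix.mulVec_sub, Matrix.mulVec_smul]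
    abel
  -- conclude
  rw [Asymptotics.isBigO_iff]
  refine ⟨Lf * M + ‖T‖ * (Lfs * C1), ?_⟩
  filter_upwards [Ioc_mem_nhdsGT_of_mem (Set.mem_Ico.2 ⟨le_rfl, zero_lt_one⟩)] with H hH
  rw [hkey H hH.1]
  have h1 := hyerr H hH
  have h2 := hzerr H hH
  have h3 : ‖V.mulVec (z H H - z0 - H • Wᴴ.mulVec (f y₀))‖
      ≤ ‖T‖ * ((Lfs * C1) * H ^ 2) := by
    rw [hT]
    calc ‖T (z H H - z0 - H • Wᴴ.mulVec (f y₀))‖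
        ≤ ‖T‖ * ‖z H H - z0 - H • Wᴴ.mulVec (f y₀)‖ := T.le_opNorm _
      _ ≤ ‖T‖ * ((Lfs * C1) * H ^ 2) :=
          mul_le_mul_of_nonneg_left h2 (norm_nonneg T)
  calc ‖(y H - y₀ - H • f y₀) - V.mulVec (z H H - z0 - H • Wᴴ.mulVec (f y₀))‖
      ≤ ‖y H - y₀ - H • f y₀‖ + ‖V.mulVec (z H H - z0 - H • Wᴴ.mulVec (f y₀))‖ :=
        norm_sub_le _ _
    _ ≤ (Lf * M) * H ^ 2 + ‖T‖ * ((Lfs * C1) * H ^ 2) := add_le_add h1 h3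
    _ = (Lf * M + ‖T‖ * (Lfs * C1)) * H ^ 2 := by ring
    _ ≤ (Lf * M + ‖T‖ * (Lfs * C1)) * ‖H ^ 2‖ := by
        rw [Real.norm_eq_abs, abs_of_nonneg (by positivity)]
end

section
/- Assume W*V = I_S. Let f : ℂ^N → ℂ^N and f_s : ℂ^S → ℂ^S be twice continuously differentiable (over ℝ) and globally Lipschitz. Let y : ℝ → ℂ^N satisfy y'(t) = f(y(t)) for all t with y(0) = y₀. Suppose that for each H > 0 there is a function z_H : [0,H] → ℂ^S with z_H(0) = W* y₀ and z_H'(θ) = f_s(z_H(θ)) + W* f(y₀) − f_s(W* y₀) for all θ ∈ [0,H], and define the SM-MRI-GARK Euler step Φ(H) := V z_H(H) + (I_N − V W*)( y₀ + H f(y₀) ). Then the local truncation error has leading term y(H) − Φ(H) = ½ H² ( Df(y₀)(f(y₀)) − V · Df_s(W* y₀)(W* f(y₀)) ) + O(H³) as H → 0⁺, where Df and Df_s denote the Fréchet derivatives of f and f_s; i.e., the local truncation error of SM-MRI-GARK Euler is ½ ( f'(y_n) − V f_s'(W* y_n) W* ) f(y_n) H² + O(H³). -/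
/-!
Both the exact flow and the surrogate flow are expanded to second order in `H`. Since
`z' = f_s(z) + W* f(y₀) − f_s(W* y₀)`, the constant forcing makes `z'(0) = W* f(y₀)`, so the
first-order terms `H f(y₀)` and `V W* H f(y₀)` of `y(H)` and `Φ(H)` match, and only the
second derivatives `Df(y₀) f(y₀)` and `V Df_s(W* y₀) W* f(y₀)` survive. Global Lipschitz
continuity of `f_s` makes `z_H` the restriction of `z_1` to `[0, H]`, so one Taylor remainder
bound for `z_1` controls all `z_H` at once.
-/

open Set Matrix Asymptotics Filter Topology

open scoped Nat

section Taylor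

variable {E : Type*} [NormedAddCommGroup E] [NormedSpace ℝ E]

theorem norm_le_pow_succ_div_factorial_of_norm_deriv_le {r r' : ℝ → E} {T C : ℝ} {k : ℕ}
    (hr0 : r 0 = 0) (hr : ∀ t ∈ Icc 0 T, HasDerivAt r (r' t) t)
    (bound : ∀ t ∈ Icc 0 T, ‖r' t‖ ≤ C * t ^ k / k !) :
    ∀ t ∈ Icc 0 T, ‖r t‖ ≤ C * t ^ (k + 1) / (k + 1)! := by
  have hB (t : ℝ) : HasDerivAt (fun s => C * s ^ (k + 1) / (k + 1)!) (C * t ^ k / k !) t :=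
    (((hasDerivAt_pow (k + 1) t).const_mul C).div_const ((k + 1)! : ℝ)).congr_deriv <| by
      rw [Nat.factorial_succ]
      push_cast
      field_simp
  exact image_norm_le_of_norm_deriv_right_le_deriv_boundary (HasDerivAt.continuousOn hr)
    (fun t ht => (hr t (Ico_subset_Icc_self ht)).hasDerivWithinAt) (by simp [hr0]) hB
    (fun t ht => bound t (Ico_subset_Icc_self ht))

theorem norm_taylor_two_remainder_le {u u₁ u₂ u₃ : ℝ → E} {T M : ℝ}
    (hu : ∀ t ∈ Icc 0 T, HasDerivAt u (u₁ t) t) (hu₁ : ∀ t ∈ Icc 0 T, HasDerivAt u₁ (u₂ t) t)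
    (hu₂ : ∀ t ∈ Icc 0 T, HasDerivAt u₂ (u₃ t) t) (hM : ∀ t ∈ Icc 0 T, ‖u₃ t‖ ≤ M) :
    ∀ t ∈ Icc 0 T, ‖u t - u 0 - t • u₁ 0 - (t ^ 2 / 2) • u₂ 0‖ ≤ M * t ^ 3 / 6 := by
  have hr₂ := norm_le_pow_succ_div_factorial_of_norm_deriv_le (k := 0) (r := fun t => u₂ t - u₂ 0)
    (by simp) (fun t ht => (hu₂ t ht).sub_const _) (by simpa using hM)
  have hr₁ := norm_le_pow_succ_div_factorial_of_norm_deriv_le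
    (r := fun t => u₁ t - u₁ 0 - t • u₂ 0) (by simp)
    (fun t ht => (((hu₁ t ht).sub_const _).fun_sub ((hasDerivAt_id' t).smul_const _)).congr_deriv
      (by simp))
    hr₂
  have hr := norm_le_pow_succ_div_factorial_of_norm_deriv_le
    (r := fun t => u t - u 0 - t • u₁ 0 - (t ^ 2 / 2) • u₂ 0) (by simp)
    (fun t ht => ((((hu t ht).sub_const _).fun_sub ((hasDerivAt_id' t).smul_const _)).fun_sub
      (((hasDerivAt_pow 2 t).div_const 2).smul_const (u₂ 0))).congr_deriv (by simp))
    hr₁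
  intro t ht
  simpa [Nat.factorial] using hr t ht

theorem ode_solution_taylor_two {F : E → E} (hF : ContDiff ℝ 2 F) {u : ℝ → E} {T : ℝ}
    (hT : 0 < T) (hu : ∀ t ∈ Icc 0 T, HasDerivAt u (F (u t)) t) :
    (fun t => u t - u 0 - t • F (u 0) - (t ^ 2 / 2) • fderiv ℝ F (u 0) (F (u 0)))
      =O[𝓝[≥] 0] fun t => t ^ 3 := by
  have hDF : ContDiff ℝ 1 (fderiv ℝ F) := hF.fderiv_right (by norm_num)
  set u₁ : ℝ → E := fun t => F (u t)
  set u₂ : ℝ → E := fun t => fderiv ℝ F (u t) (u₁ t)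
  set u₃ : ℝ → E := fun t =>
    fderiv ℝ (fderiv ℝ F) (u t) (u₁ t) (u₁ t) + fderiv ℝ F (u t) (u₂ t)
  have hu₁ : ∀ t ∈ Icc 0 T, HasDerivAt u₁ (u₂ t) t := fun t ht =>
    ((hF.differentiable (by norm_num)) (u t)).hasFDerivAt.comp_hasDerivAt t (hu t ht)
  have hu₂ : ∀ t ∈ Icc 0 T, HasDerivAt u₂ (u₃ t) t := fun t ht =>
    (((hDF.differentiable one_ne_zero) (u t)).hasFDerivAt.comp_hasDerivAt t (hu t ht)).clm_apply
      (hu₁ t ht)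
  have hu_cont : ContinuousOn u (Icc 0 T) := HasDerivAt.continuousOn hu
  have hu₁_cont : ContinuousOn u₁ (Icc 0 T) := hF.continuous.comp_continuousOn hu_cont
  have hu₃_cont : ContinuousOn u₃ (Icc 0 T) := by
    have hDFu := hDF.continuous.comp_continuousOn hu_cont
    exact ((((hDF.continuous_fderiv one_ne_zero).comp_continuousOn hu_cont).clm_apply
      hu₁_cont).clm_apply hu₁_cont).add (hDFu.clm_apply (hDFu.clm_apply hu₁_cont))
  obtain ⟨M, hM⟩ := isCompact_Icc.exists_bound_of_continuousOn hu₃_cont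
  have hrem := norm_taylor_two_remainder_le hu hu₁ hu₂ hM
  refine IsBigO.of_bound (M / 6) ?_
  filter_upwards [Icc_mem_nhdsGE hT] with t ht
  rw [Real.norm_of_nonneg (pow_nonneg ht.1 3)]
  linarith [hrem t ht]

end Taylor

theorem sm_mri_gark_euler_leading_error_general (N S : ℕ)
    (V W : Matrix (Fin N) (Fin S) ℂ)
    (f : (Fin N → ℂ) → (Fin N → ℂ)) (fs : (Fin S → ℂ) → (Fin S → ℂ))
    (hf : ContDiff ℝ 2 f) (hfs : ContDiff ℝ 2 fs)
    (Lfs : NNReal) (hfsL : LipschitzWith Lfs fs)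
    (y₀ : Fin N → ℂ)
    (y : ℝ → (Fin N → ℂ)) (hy0 : y 0 = y₀)
    (hy : ∀ t : ℝ, HasDerivAt y (f (y t)) t)
    (z : ℝ → ℝ → (Fin S → ℂ))
    (hz0 : ∀ H : ℝ, 0 < H → z H 0 = Wᴴ.mulVec y₀)
    (hz : ∀ H : ℝ, 0 < H → ∀ θ ∈ Set.Icc (0:ℝ) H,
      HasDerivAt (z H)
        (fs (z H θ) + (Wᴴ.mulVec (f y₀) - fs (Wᴴ.mulVec y₀))) θ) :
    (fun H : ℝ =>
        y H -
          (V.mulVec (z H H) +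
            ((y₀ + H • f y₀) - (V * Wᴴ).mulVec (y₀ + H • f y₀))) -
          (H ^ 2 / 2) •
            (fderiv ℝ f y₀ (f y₀) -
              V.mulVec (fderiv ℝ fs (Wᴴ.mulVec y₀) (Wᴴ.mulVec (f y₀)))))
      =O[𝓝[>] (0:ℝ)] fun H : ℝ => H ^ 3 := by
  set c := Wᴴ *ᵥ f y₀ - fs (Wᴴ *ᵥ y₀)
  have hz_eq : ∀ H ∈ Ioc (0 : ℝ) 1, z H H = z 1 H := fun H hH =>
    ODE_solution_unique (v := fun _ x => fs x + c)
      (fun _ => by simpa using hfsL.add (LipschitzWith.const c))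
      (HasDerivAt.continuousOn (hz H hH.1))
      (fun t ht => (hz H hH.1 t (Ico_subset_Icc_self ht)).hasDerivWithinAt)
      (HasDerivAt.continuousOn fun t ht => hz 1 one_pos t ⟨ht.1, ht.2.trans hH.2⟩)
      (fun t ht => (hz 1 one_pos t ⟨ht.1, ht.2.le.trans hH.2⟩).hasDerivWithinAt)
      (by rw [hz0 H hH.1, hz0 1 one_pos]) (right_mem_Icc.2 hH.1.le)
  have hy_taylor := ode_solution_taylor_two hf one_pos fun t _ => hy t
  have hz_taylor := ode_solution_taylor_two (hfs.add contDiff_const) one_pos (hz 1 one_pos)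
  simp only [hy0, hz0 1 one_pos, fderiv_add_const, c, add_sub_cancel] at hy_taylor hz_taylor
  have hV := (LinearMap.toContinuousLinearMap (mulVecLin V)).isBigO_comp
    (fun t => z 1 t - Wᴴ *ᵥ y₀ - t • Wᴴ *ᵥ f y₀ -
      (t ^ 2 / 2) • fderiv ℝ fs (Wᴴ *ᵥ y₀) (Wᴴ *ᵥ f y₀)) (𝓝[≥] 0)
  refine ((hy_taylor.sub (hV.trans hz_taylor)).mono
    (nhdsWithin_mono 0 Ioi_subset_Ici_self)).congr' ?_ EventuallyEq.rfl
  filter_upwards [Ioc_mem_nhdsGT one_pos] with H hH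
  simp only [hz_eq H hH, LinearMap.coe_toContinuousLinearMap', mulVecLin_apply,
    ← mulVec_mulVec, mulVec_sub, mulVec_add, mulVec_smul, smul_sub]
  abel

/-- With `W* V = I_S`, `f` and `f_s` twice continuously differentiable
and globally Lipschitz, and `y` the exact solution of `y' = f(y)`, `y(0) = y₀`, the
SM-MRI-GARK Euler step `Φ(H) = V z_H(H) + (I − V W*) (y₀ + H f(y₀))` has local
truncation error with leading term
`y(H) − Φ(H) = ½ H² (Df(y₀)(f(y₀)) − V Df_s(W* y₀)(W* f(y₀))) + O(H³)` as `H → 0⁺`. -/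
theorem sm_mri_gark_euler_leading_error (N S : ℕ) (hN : 0 < N) (hS : 0 < S)
    (V W : Matrix (Fin N) (Fin S) ℂ) (hVW : Wᴴ * V = 1)
    (f : (Fin N → ℂ) → (Fin N → ℂ)) (fs : (Fin S → ℂ) → (Fin S → ℂ))
    (hf : ContDiff ℝ 2 f) (hfs : ContDiff ℝ 2 fs)
    (Lf Lfs : NNReal) (hfL : LipschitzWith Lf f) (hfsL : LipschitzWith Lfs fs)
    (y₀ : Fin N → ℂ)
    (y : ℝ → (Fin N → ℂ)) (hy0 : y 0 = y₀)
    (hy : ∀ t : ℝ, HasDerivAt y (f (y t)) t)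
    (z : ℝ → ℝ → (Fin S → ℂ))
    (hz0 : ∀ H : ℝ, 0 < H → z H 0 = Wᴴ.mulVec y₀)
    (hz : ∀ H : ℝ, 0 < H → ∀ θ ∈ Set.Icc (0:ℝ) H,
      HasDerivAt (z H)
        (fs (z H θ) + (Wᴴ.mulVec (f y₀) - fs (Wᴴ.mulVec y₀))) θ) :
    (fun H : ℝ =>
        y H -
          (V.mulVec (z H H) +
            ((y₀ + H • f y₀) - (V * Wᴴ).mulVec (y₀ + H • f y₀))) -
          (H ^ 2 / 2) •
            (fderiv ℝ f y₀ (f y₀) -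
              V.mulVec (fderiv ℝ fs (Wᴴ.mulVec y₀) (Wᴴ.mulVec (f y₀)))))
      =O[𝓝[>] (0:ℝ)] fun H : ℝ => H ^ 3 :=
  sm_mri_gark_euler_leading_error_general N S V W f fs hf hfs Lfs hfsL y₀ y hy0 hy z hz0 hz
end
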